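/- Let Q ∈ ℝ^{n×n} be diagonal positive definite, let S ∈ ℝ^{r×n} have full row rank with r < n, let W_b ∈ ℝ^{r×m}, let T_x ∈ ℝ^{n×n} and T_ν ∈ ℝ^{r×r} be diagonal positive definite, and let t_c, t_b ≥ 0. Define A = [[−T_x⁻¹Q, −T_x⁻¹Sᵀ], [T_ν⁻¹S, 0]], B = [[t_c T_x⁻¹, 0], [0, t_b T_ν⁻¹ W_b]], and C = [Q^{1/2}, 0]. Then the unique symmetric solution X of the Lyapunov equation AᵀX + XA + CᵀC = 0 satisfies Tr(BᵀXB) = (t_c²/2)·Tr(T_x⁻¹) + (t_b²/2)·Tr(W_bᵀ T_ν⁻¹ W_b). In particular, the squared H₂ norm of the input-output saddle-point dynamics equals this expression and is independent of Q and S. -/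

import Mathlib

open Matrix

section
open scoped ComplexOrder

/-- The square root of a positive semidefinite matrix, as defined in Mathlib (Dec 2024). -/
noncomputable def Matrix.PosSemidef.sqrt {n 𝕜 : Type*} [Fintype n] [DecidableEq n] [RCLike 𝕜]
    {A : Matrix n n 𝕜} (hA : A.PosSemidef) : Matrix n n 𝕜 :=
  hA.1.eigenvectorUnitary.1 * diagonal ((↑) ∘ (√·) ∘ hA.1.eigenvalues) *
    (star hA.1.eigenvectorUnitary : Matrix n n 𝕜)

end

/-!
With `P = diag(Tx, Tν)` the dynamics matrix factors as `A = P⁻¹ K`, where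
`K = [[-Q, -Sᵀ], [S, 0]]` has symmetric part `diag(-Q, 0) = -CᵀC`. Hence `X₀ = P / 2` solves
`AᵀX + XA + CᵀC = 0`. This positive definite solution is a Lyapunov certificate: for an
eigenpair `A v = μ v` it gives `Re μ · v*Pv = -|Cv|²`, and `Cv = 0` forces `v = 0` through the
first block row of `K v = μ P v` and the injectivity of `Sᵀ`. So `A` is Hurwitz, the spectra of
`A` and `-Aᵀ` are disjoint, and the Sylvester operator `Z ↦ AᵀZ + ZA` is injective: `X₀` is the
only solution. Finally `Tr(BᵀX₀B)` splits along the blocks into the two stated terms.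
-/

namespace Matrix

section Sqrt

open scoped ComplexOrder

variable {n 𝕜 : Type*} [Fintype n] [DecidableEq n] [RCLike 𝕜]

theorem PosSemidef.conjTranspose_sqrt {A : Matrix n n 𝕜} (hA : A.PosSemidef) :
    hA.sqrtᴴ = hA.sqrt := by
  simp [PosSemidef.sqrt, conjTranspose_mul, Matrix.mul_assoc, star_eq_conjTranspose,
    diagonal_conjTranspose, Pi.star_def, Function.comp_def]

theorem PosSemidef.sqrt_mul_sqrt {A : Matrix n n 𝕜} (hA : A.PosSemidef) :
    hA.sqrt * hA.sqrt = A := by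
  set U := hA.1.eigenvectorUnitary
  calc hA.sqrt * hA.sqrt
      = (U : Matrix n n 𝕜) * (diagonal ((↑) ∘ (√·) ∘ hA.1.eigenvalues) *
          ((star U : Matrix n n 𝕜) * (U : Matrix n n 𝕜)) *
            diagonal ((↑) ∘ (√·) ∘ hA.1.eigenvalues)) * (star U : Matrix n n 𝕜) := by
        simp only [PosSemidef.sqrt, Matrix.mul_assoc, U]
    _ = (U : Matrix n n 𝕜) * diagonal (RCLike.ofReal ∘ hA.1.eigenvalues) *
          (star U : Matrix n n 𝕜) := by
        rw [Unitary.coe_star_mul_self, Matrix.mul_one, diagonal_mul_diagonal]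
        congr 3
        funext i
        simp [← RCLike.ofReal_mul, Real.mul_self_sqrt (hA.eigenvalues_nonneg i)]
    _ = A := hA.1.spectral_theorem.symm

theorem PosDef.mulVec_injective_sqrt {A : Matrix n n 𝕜} (hA : A.PosDef) :
    Function.Injective hA.posSemidef.sqrt.mulVec := fun x y hxy ↦
  mulVec_injective_of_isUnit hA.isUnit <| by
    rw [← hA.posSemidef.sqrt_mul_sqrt, ← mulVec_mulVec, ← mulVec_mulVec, hxy]

end Sqrt

section Blocks

variable {m k p q R : Type*} [Fintype m] [Fintype k]

theorem PosDef.fromBlocks_zero_zero [CommRing R] [PartialOrder R] [StarRing R]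
    [StarOrderedRing R] {A : Matrix m m R} {D : Matrix k k R} (hA : A.PosDef) (hD : D.PosDef) :
    (fromBlocks A 0 0 D).PosDef := by
  refine posDef_iff_dotProduct_mulVec.mpr ⟨hA.1.fromBlocks (by simp) hD.1, fun x hx ↦ ?_⟩
  have hsplit : star x ⬝ᵥ (fromBlocks A 0 0 D *ᵥ x) =
      star (x ∘ Sum.inl) ⬝ᵥ (A *ᵥ (x ∘ Sum.inl)) +
        star (x ∘ Sum.inr) ⬝ᵥ (D *ᵥ (x ∘ Sum.inr)) := by
    rw [← Sum.elim_comp_inl_inr x, fromBlocks_mulVec]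
    simp [dotProduct, Fintype.sum_sum_type]
  rw [hsplit]
  by_cases hl : x ∘ Sum.inl = 0
  · have hr : x ∘ Sum.inr ≠ 0 := fun hr ↦ hx <| by
      rw [← Sum.elim_comp_inl_inr x, hl, hr]
      exact Sum.elim_zero_zero
    simpa [hl] using hD.dotProduct_mulVec_pos hr
  · exact add_pos_of_pos_of_nonneg (hA.dotProduct_mulVec_pos hl)
      (hD.posSemidef.dotProduct_mulVec_nonneg _)

theorem trace_fromBlocks [AddCommMonoid R] (A : Matrix m m R) (B : Matrix m k R)
    (C : Matrix k m R) (D : Matrix k k R) :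
    (fromBlocks A B C D).trace = A.trace + D.trace := by
  simp [trace, Fintype.sum_sum_type]

theorem trace_transpose_mul_fromBlocks_mul [Fintype p] [Fintype q] [Semiring R]
    (B₁ : Matrix m p R) (B₂ : Matrix k q R) (X₁ : Matrix m m R) (X₂ : Matrix k k R) :
    ((fromBlocks B₁ 0 0 B₂)ᵀ * fromBlocks X₁ 0 0 X₂ * fromBlocks B₁ 0 0 B₂).trace =
      (B₁ᵀ * X₁ * B₁).trace + (B₂ᵀ * X₂ * B₂).trace := by
  simp [fromBlocks_transpose, fromBlocks_multiply, trace_fromBlocks]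

end Blocks

theorem IsSymm.transpose_inv_mul_mul_mul_inv_mul {n p R : Type*} [Fintype n] [DecidableEq n]
    [CommRing R] {T : Matrix n n R} (hT : T.IsSymm) (hdet : IsUnit T.det) (W : Matrix n p R) :
    (T⁻¹ * W)ᵀ * T * (T⁻¹ * W) = Wᵀ * T⁻¹ * W := by
  rw [transpose_mul, transpose_nonsing_inv, hT.eq, Matrix.mul_assoc, Matrix.mul_assoc,
    ← Matrix.mul_assoc T, mul_nonsing_inv _ hdet, Matrix.one_mul, Matrix.mul_assoc]

theorem mulVec_injective_of_rank_eq {K m n : Type*} [Field K] [Fintype m] [Fintype n]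
    {A : Matrix m n K} (hA : A.rank = Fintype.card n) : Function.Injective A.mulVec := by
  have hker := LinearMap.finrank_range_add_finrank_ker A.mulVecLin
  rw [← Matrix.rank, hA, Module.finrank_fintype_fun_eq_card, add_eq_left,
    Submodule.finrank_eq_zero] at hker
  exact LinearMap.ker_eq_bot.mp hker

section Complexification

open scoped ComplexOrder

variable {m n : Type*}

theorem transpose_map_ofReal (M : Matrix m n ℝ) :
    Mᵀ.map Complex.ofRealHom = (M.map Complex.ofRealHom)ᴴ := by
  rw [← conjTranspose_map _ fun x ↦ by simp, conjTranspose_eq_transpose_of_trivial]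

theorem IsHermitian.map_ofReal {M : Matrix n n ℝ} (hM : M.IsHermitian) :
    (M.map Complex.ofRealHom).IsHermitian :=
  hM.map _ fun x ↦ by simp

variable [Fintype n]

theorem re_map_ofReal_mulVec (M : Matrix m n ℝ) (v : n → ℂ) (i : m) :
    ((M.map Complex.ofRealHom *ᵥ v) i).re = (M *ᵥ fun j ↦ (v j).re) i := by
  simp [mulVec, dotProduct, Complex.re_sum]

theorem im_map_ofReal_mulVec (M : Matrix m n ℝ) (v : n → ℂ) (i : m) :
    ((M.map Complex.ofRealHom *ᵥ v) i).im = (M *ᵥ fun j ↦ (v j).im) i := by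
  simp [mulVec, dotProduct, Complex.im_sum]

theorem mulVec_injective_map_ofReal {M : Matrix m n ℝ} (hM : Function.Injective M.mulVec) :
    Function.Injective (M.map Complex.ofRealHom).mulVec := by
  intro v w hvw
  have hre : (fun j ↦ (v j).re) = fun j ↦ (w j).re := hM <| funext fun i ↦ by
    rw [← re_map_ofReal_mulVec, ← re_map_ofReal_mulVec, hvw]
  have him : (fun j ↦ (v j).im) = fun j ↦ (w j).im := hM <| funext fun i ↦ by
    rw [← im_map_ofReal_mulVec, ← im_map_ofReal_mulVec, hvw]
  exact funext fun j ↦ Complex.ext (congrFun hre j) (congrFun him j)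

theorem re_star_dotProduct_map_ofReal_mulVec (M : Matrix n n ℝ) (v : n → ℂ) :
    (star v ⬝ᵥ (M.map Complex.ofRealHom *ᵥ v)).re =
      (fun i ↦ (v i).re) ⬝ᵥ (M *ᵥ fun i ↦ (v i).re) +
        (fun i ↦ (v i).im) ⬝ᵥ (M *ᵥ fun i ↦ (v i).im) := by
  simp only [dotProduct, Complex.re_sum, Pi.star_apply, Complex.star_def, Complex.mul_re,
    Complex.conj_re, Complex.conj_im, re_map_ofReal_mulVec, im_map_ofReal_mulVec,
    ← Finset.sum_add_distrib]
  ring_nf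

theorem im_star_dotProduct_map_ofReal_mulVec (M : Matrix n n ℝ) (v : n → ℂ) :
    (star v ⬝ᵥ (M.map Complex.ofRealHom *ᵥ v)).im =
      (fun i ↦ (v i).re) ⬝ᵥ (M *ᵥ fun i ↦ (v i).im) -
        (fun i ↦ (v i).im) ⬝ᵥ (M *ᵥ fun i ↦ (v i).re) := by
  simp only [dotProduct, Complex.im_sum, Pi.star_apply, Complex.star_def, Complex.mul_im,
    Complex.conj_re, Complex.conj_im, re_map_ofReal_mulVec, im_map_ofReal_mulVec,
    ← Finset.sum_sub_distrib]
  ring_nf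

theorem IsHermitian.star_dotProduct_map_ofReal_mulVec {M : Matrix n n ℝ} (hM : M.IsHermitian)
    (v : n → ℂ) :
    star v ⬝ᵥ (M.map Complex.ofRealHom *ᵥ v) =
      ((fun i ↦ (v i).re) ⬝ᵥ (M *ᵥ fun i ↦ (v i).re) +
        (fun i ↦ (v i).im) ⬝ᵥ (M *ᵥ fun i ↦ (v i).im) : ℝ) := by
  refine Complex.ext (re_star_dotProduct_map_ofReal_mulVec M v) ?_
  rw [im_star_dotProduct_map_ofReal_mulVec, Complex.ofReal_im, sub_eq_zero, dotProduct_mulVec,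
    ← mulVec_transpose, dotProduct_comm, ← conjTranspose_eq_transpose_of_trivial, hM.eq]

theorem PosDef.map_ofReal {M : Matrix n n ℝ} (hM : M.PosDef) :
    (M.map Complex.ofRealHom).PosDef := by
  refine posDef_iff_dotProduct_mulVec.mpr ⟨hM.1.map_ofReal, fun v hv ↦ ?_⟩
  rw [hM.1.star_dotProduct_map_ofReal_mulVec, Complex.zero_lt_real]
  have hq (x : n → ℝ) : 0 ≤ x ⬝ᵥ (M *ᵥ x) := by
    simpa using hM.posSemidef.dotProduct_mulVec_nonneg x
  by_cases hre : (fun i ↦ (v i).re) = 0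
  · have him : (fun i ↦ (v i).im) ≠ 0 := fun him ↦ hv <| funext fun i ↦
      Complex.ext (congrFun hre i) (congrFun him i)
    exact add_pos_of_nonneg_of_pos (hq _) (by simpa using hM.dotProduct_mulVec_pos him)
  · exact add_pos_of_pos_of_nonneg (by simpa using hM.dotProduct_mulVec_pos hre) (hq _)

end Complexification

section Spectrum

variable {ι : Type*} [Fintype ι] [DecidableEq ι]

open Polynomial in
/-- Sylvester: `Z` intertwines polynomials in `M` and `N`, and the characteristic polynomial of
`M` kills `M` but is invertible at `N`. -/
theorem eq_zero_of_mul_eq_mul_of_disjoint_spectrum {K κ : Type*} [Field K] [IsAlgClosed K]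
    [Fintype κ] [DecidableEq κ] {M : Matrix κ κ K} {N : Matrix ι ι K} {Z : Matrix ι κ K}
    (hZ : Z * M = N * Z) (hMN : Disjoint (spectrum K M) (spectrum K N)) : Z = 0 := by
  have hpow (k : ℕ) : Z * M ^ k = N ^ k * Z := by
    induction k with
    | zero => simp
    | succ k ih =>
      rw [pow_succ, pow_succ, ← Matrix.mul_assoc, ih, Matrix.mul_assoc, hZ, Matrix.mul_assoc]
  have hpoly (p : K[X]) : Z * aeval M p = aeval N p * Z := by
    induction p using Polynomial.induction_on' with
    | add p q hp hq => rw [map_add, map_add, Matrix.mul_add, Matrix.add_mul, hp, hq]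
    | monomial k a =>
      rw [aeval_monomial, aeval_monomial, Algebra.algebraMap_eq_smul_one,
        Algebra.algebraMap_eq_smul_one, smul_mul_assoc, smul_mul_assoc, one_mul, one_mul,
        Matrix.mul_smul, Matrix.smul_mul, hpow]
  have hunit : IsUnit (aeval N M.charpoly).det := by
    rw [← isUnit_iff_isUnit_det,
      (IsAlgClosed.splits M.charpoly).eq_prod_roots_of_monic M.charpoly_monic]
    by_contra h
    obtain ⟨k, hkN, hkM⟩ := spectrum.exists_mem_of_not_isUnit_aeval_prod h
    exact hMN.ne_of_mem (mem_spectrum_iff_isRoot_charpoly.mpr hkM) hkN rfl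
  have hkill := hpoly M.charpoly
  rw [aeval_self_charpoly, Matrix.mul_zero] at hkill
  calc Z = ((aeval N M.charpoly)⁻¹ * aeval N M.charpoly) * Z := by
        rw [nonsing_inv_mul _ hunit, Matrix.one_mul]
    _ = 0 := by rw [Matrix.mul_assoc, ← hkill, Matrix.mul_zero]

theorem exists_mulVec_eq_smul_of_mem_spectrum {K : Type*} [Field K] {A : Matrix ι ι K} {μ : K}
    (hμ : μ ∈ spectrum K A) : ∃ v, v ≠ 0 ∧ A *ᵥ v = μ • v := by
  rw [← spectrum_toLin', ← Module.End.hasEigenvalue_iff_mem_spectrum] at hμ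
  obtain ⟨v, hv⟩ := hμ.exists_hasEigenvector
  exact ⟨v, hv.2, by simpa using hv.apply_eq_smul⟩

def IsHurwitz (A : Matrix ι ι ℝ) : Prop :=
  ∀ μ ∈ spectrum ℂ (A.map Complex.ofRealHom), μ.re < 0

theorem IsHurwitz.eq_zero_of_transpose_mul_add_mul_eq_zero {A Z : Matrix ι ι ℝ}
    (hA : A.IsHurwitz) (hZ : Aᵀ * Z + Z * A = 0) : Z = 0 := by
  set A' := A.map Complex.ofRealHom
  have hZ' : Z.map Complex.ofRealHom * A' = -A'ᵀ * Z.map Complex.ofRealHom := by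
    have hmap := congrArg Complex.ofRealHom.mapMatrix hZ
    rw [map_add, map_mul, map_mul, map_zero] at hmap
    rw [Matrix.neg_mul, eq_neg_iff_add_eq_zero, add_comm]
    simpa [transpose_map] using hmap
  have hdisj : Disjoint (spectrum ℂ A') (spectrum ℂ (-A'ᵀ)) := by
    refine Set.disjoint_left.mpr fun μ hμ hμ' ↦ ?_
    rw [← spectrum.neg_eq, Set.mem_neg, mem_spectrum_iff_isRoot_charpoly, charpoly_transpose,
      ← mem_spectrum_iff_isRoot_charpoly] at hμ'
    linarith [hA _ hμ, Complex.neg_re μ ▸ hA _ hμ']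
  ext i j
  simpa using congrFun (congrFun (eq_zero_of_mul_eq_mul_of_disjoint_spectrum hZ' hdisj) i) j

theorem IsHurwitz.eq_of_lyapunov {A X Y W : Matrix ι ι ℝ} (hA : A.IsHurwitz)
    (hX : Aᵀ * X + X * A + W = 0) (hY : Aᵀ * Y + Y * A + W = 0) : X = Y := by
  refine sub_eq_zero.mp (hA.eq_zero_of_transpose_mul_add_mul_eq_zero ?_)
  rw [Matrix.mul_sub, Matrix.sub_mul]
  linear_combination (norm := abel) hX - hY

open scoped ComplexOrder in
theorem isHurwitz_of_lyapunov {κ : Type*} [Fintype κ] {A X : Matrix ι ι ℝ} {C : Matrix κ ι ℝ}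
    (hX : X.PosDef) (hAXC : Aᵀ * X + X * A + Cᵀ * C = 0)
    (hobs : ∀ (μ : ℂ) (v : ι → ℂ), A.map Complex.ofRealHom *ᵥ v = μ • v →
      C.map Complex.ofRealHom *ᵥ v = 0 → v = 0) :
    A.IsHurwitz := by
  intro μ hμ
  obtain ⟨v, hv0, hv⟩ := exists_mulVec_eq_smul_of_mem_spectrum hμ
  have hAXC' := congrArg Complex.ofRealHom.mapMatrix hAXC
  simp only [map_add, map_mul, map_zero, RingHom.mapMatrix_apply, Matrix.map_mul,
    transpose_map_ofReal] at hAXC'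
  set A' := A.map Complex.ofRealHom
  set X' := X.map Complex.ofRealHom
  set w := C.map Complex.ofRealHom *ᵥ v
  have hleft : star v ⬝ᵥ (A'ᴴ *ᵥ (X' *ᵥ v)) = star μ * (star v ⬝ᵥ (X' *ᵥ v)) := by
    rw [dotProduct_mulVec, ← star_mulVec, hv, star_smul, smul_dotProduct, smul_eq_mul]
  have hright : star v ⬝ᵥ (X' *ᵥ (A' *ᵥ v)) = μ * (star v ⬝ᵥ (X' *ᵥ v)) := by
    rw [hv, mulVec_smul, dotProduct_smul, smul_eq_mul]
  have hout : star v ⬝ᵥ ((C.map Complex.ofRealHom)ᴴ *ᵥ w) = star w ⬝ᵥ w := by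
    rw [dotProduct_mulVec, ← star_mulVec]
  have key : (star μ + μ) * (star v ⬝ᵥ (X' *ᵥ v)) + star w ⬝ᵥ w = 0 := by
    rw [add_mul, ← hleft, ← hright, ← hout, mulVec_mulVec, mulVec_mulVec, mulVec_mulVec,
      ← dotProduct_add, ← dotProduct_add, ← add_mulVec, ← add_mulVec, hAXC', zero_mulVec,
      dotProduct_zero]
  have hx := Complex.pos_iff.mp (hX.map_ofReal.dotProduct_mulVec_pos hv0)
  have hw := Complex.nonneg_iff.mp (dotProduct_star_self_nonneg w)
  have hre := congrArg Complex.re key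
  simp only [Complex.add_re, Complex.mul_re, Complex.add_im, Complex.star_def, Complex.conj_re,
    Complex.conj_im, Complex.zero_re] at hre
  by_contra hμ
  have hw0 : star w ⬝ᵥ w = 0 := Complex.ext (by rw [Complex.zero_re]; nlinarith) hw.2.symm
  exact hv0 (hobs μ v hv (dotProduct_star_self_eq_zero.mp hw0))

end Spectrum

end Matrix

def saddleMatrix {m k R : Type*} [Ring R] (Q : Matrix m m R) (S : Matrix k m R) :
    Matrix (m ⊕ k) (m ⊕ k) R :=
  fromBlocks (-Q) (-Sᵀ) S 0

section SaddlePoint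

variable {m k : Type*} [Fintype m] [Fintype k]

theorem fromBlocks_mul_eq_saddleMatrix [DecidableEq m] [DecidableEq k] {Tx Q : Matrix m m ℝ}
    {Tν : Matrix k k ℝ} (S : Matrix k m ℝ) (hTx : IsUnit Tx.det) (hTν : IsUnit Tν.det) :
    fromBlocks Tx 0 0 Tν * fromBlocks (-(Tx⁻¹ * Q)) (-(Tx⁻¹ * Sᵀ)) (Tν⁻¹ * S) 0 =
      saddleMatrix Q S := by
  rw [fromBlocks_multiply]
  simp [saddleMatrix, ← Matrix.mul_assoc, mul_nonsing_inv _ hTx, mul_nonsing_inv _ hTν]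

theorem lyapunov_of_mul_eq_saddleMatrix {Q : Matrix m m ℝ} {S : Matrix k m ℝ}
    {P A : Matrix (m ⊕ k) (m ⊕ k) ℝ} (hP : P.IsSymm) (hQ : Q.IsSymm)
    (hPA : P * A = saddleMatrix Q S) :
    Aᵀ * ((1 / 2 : ℝ) • P) + ((1 / 2 : ℝ) • P) * A + fromBlocks Q 0 0 0 = 0 := by
  have hAP : Aᵀ * P = (saddleMatrix Q S)ᵀ := by rw [← hPA, transpose_mul, hP.eq]
  have hQij (i j : m) : Q j i = Q i j := congrFun (congrFun hQ.eq i) j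
  rw [Matrix.mul_smul, Matrix.smul_mul, hAP, hPA, saddleMatrix, fromBlocks_transpose]
  ext (i | i) (j | j)
  · simp only [Matrix.add_apply, Matrix.smul_apply, fromBlocks_apply₁₁, Matrix.neg_apply,
      transpose_neg, transpose_apply, hQij, smul_eq_mul, Matrix.zero_apply]
    ring
  all_goals simp

theorem eq_zero_of_saddleMatrix_eigenvector {Px : Matrix m m ℝ} {Pk : Matrix k k ℝ}
    {Q R : Matrix m m ℝ} {S : Matrix k m ℝ} {A : Matrix (m ⊕ k) (m ⊕ k) ℝ}
    (hR : Function.Injective R.mulVec) (hS : Function.Injective Sᵀ.mulVec)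
    (hPA : fromBlocks Px 0 0 Pk * A = saddleMatrix Q S) {μ : ℂ} {v : m ⊕ k → ℂ}
    (hv : A.map Complex.ofRealHom *ᵥ v = μ • v)
    (hRv : (fromCols R 0).map Complex.ofRealHom *ᵥ v = 0) : v = 0 := by
  have hl : v ∘ Sum.inl = 0 := by
    refine mulVec_injective_map_ofReal hR ?_
    simpa [fromCols_map, fromCols_mulVec] using hRv
  have hPA' := congrArg (fun M ↦ M.map Complex.ofRealHom *ᵥ v) hPA
  simp only [Matrix.map_mul, ← mulVec_mulVec, hv, saddleMatrix, fromBlocks_map] at hPA'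
  have hl' (j : m) : v (Sum.inl j) = 0 := congrFun hl j
  have hr : v ∘ Sum.inr = 0 := by
    refine mulVec_injective_map_ofReal hS (funext fun i ↦ ?_)
    simpa [mulVec, dotProduct, hl'] using congrFun hPA' (Sum.inl i)
  rw [← Sum.elim_comp_inl_inr v, hl, hr]
  exact Sum.elim_zero_zero

theorem trace_transpose_mul_half_fromBlocks_mul {p : Type*} [Fintype p] [DecidableEq m]
    [DecidableEq k] {Tx : Matrix m m ℝ} {Tν : Matrix k k ℝ} (hTx : Tx.IsSymm)
    (hTxdet : IsUnit Tx.det) (hTν : Tν.IsSymm) (hTνdet : IsUnit Tν.det) (tc tb : ℝ)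
    (Wb : Matrix k p ℝ) :
    ((fromBlocks (tc • Tx⁻¹) 0 0 (tb • (Tν⁻¹ * Wb)))ᵀ * ((1 / 2 : ℝ) • fromBlocks Tx 0 0 Tν) *
        fromBlocks (tc • Tx⁻¹) 0 0 (tb • (Tν⁻¹ * Wb))).trace =
      tc ^ 2 / 2 * Tx⁻¹.trace + tb ^ 2 / 2 * (Wbᵀ * Tν⁻¹ * Wb).trace := by
  have hTx' := hTx.transpose_inv_mul_mul_mul_inv_mul hTxdet (1 : Matrix m m ℝ)
  rw [Matrix.mul_one, transpose_one, Matrix.one_mul, Matrix.mul_one] at hTx'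
  rw [fromBlocks_smul, smul_zero, smul_zero, trace_transpose_mul_fromBlocks_mul]
  simp only [transpose_smul, Matrix.smul_mul, Matrix.mul_smul, smul_smul, trace_smul,
    smul_eq_mul, hTx', hTν.transpose_inv_mul_mul_mul_inv_mul hTνdet Wb]
  ring

end SaddlePoint

theorem saddle_point_H2_norm_general
    (n r m : ℕ)
    (Q : Matrix (Fin n) (Fin n) ℝ) (hQ : Q.PosDef)
    (S : Matrix (Fin r) (Fin n) ℝ) (hS : S.rank = r)
    (Wb : Matrix (Fin r) (Fin m) ℝ)
    (Tx : Matrix (Fin n) (Fin n) ℝ) (hTx : Tx.PosDef)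
    (Tν : Matrix (Fin r) (Fin r) ℝ) (hTν : Tν.PosDef)
    (tc tb : ℝ)
    (A : Matrix (Fin n ⊕ Fin r) (Fin n ⊕ Fin r) ℝ)
    (hA : A = Matrix.fromBlocks (-(Tx⁻¹ * Q)) (-(Tx⁻¹ * Sᵀ)) (Tν⁻¹ * S) 0)
    (B : Matrix (Fin n ⊕ Fin r) (Fin n ⊕ Fin m) ℝ)
    (hB : B = Matrix.fromBlocks (tc • Tx⁻¹) 0 0 (tb • (Tν⁻¹ * Wb)))
    (C : Matrix (Fin n) (Fin n ⊕ Fin r) ℝ)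
    (hC : C = Matrix.fromCols hQ.posSemidef.sqrt 0) :
    (∃! X : Matrix (Fin n ⊕ Fin r) (Fin n ⊕ Fin r) ℝ,
        X.IsSymm ∧ Aᵀ * X + X * A + Cᵀ * C = 0) ∧
      ∀ X : Matrix (Fin n ⊕ Fin r) (Fin n ⊕ Fin r) ℝ,
        X.IsSymm → Aᵀ * X + X * A + Cᵀ * C = 0 →
          (Bᵀ * X * B).trace =
            tc ^ 2 / 2 * Tx⁻¹.trace + tb ^ 2 / 2 * (Wbᵀ * Tν⁻¹ * Wb).trace := by
  have hTxs : Tx.IsSymm := isHermitian_iff_isSymm.mp hTx.1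
  have hTνs : Tν.IsSymm := isHermitian_iff_isSymm.mp hTν.1
  have hTxdet := (isUnit_iff_isUnit_det Tx).mp hTx.isUnit
  have hTνdet := (isUnit_iff_isUnit_det Tν).mp hTν.isUnit
  set P := fromBlocks Tx 0 0 Tν
  have hPA : P * A = saddleMatrix Q S := hA ▸ fromBlocks_mul_eq_saddleMatrix S hTxdet hTνdet
  have hCC : Cᵀ * C = fromBlocks Q 0 0 0 := by
    rw [hC, transpose_fromCols, fromRows_mul_fromCols, ← conjTranspose_eq_transpose_of_trivial,
      hQ.posSemidef.conjTranspose_sqrt, hQ.posSemidef.sqrt_mul_sqrt]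
    simp
  have hP : P.IsSymm := hTxs.fromBlocks (by simp) hTνs
  have hsol : Aᵀ * ((1 / 2 : ℝ) • P) + ((1 / 2 : ℝ) • P) * A + Cᵀ * C = 0 :=
    hCC ▸ lyapunov_of_mul_eq_saddleMatrix hP (isHermitian_iff_isSymm.mp hQ.1) hPA
  have hST : Function.Injective Sᵀ.mulVec :=
    mulVec_injective_of_rank_eq (by rw [rank_transpose, hS, Fintype.card_fin])
  have hHurwitz : A.IsHurwitz :=
    isHurwitz_of_lyapunov ((hTx.fromBlocks_zero_zero hTν).smul (by norm_num)) hsol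
      fun _ _ hv hCv ↦ eq_zero_of_saddleMatrix_eigenvector hQ.mulVec_injective_sqrt hST hPA hv
        (hC ▸ hCv)
  have huniq (X) (hX : Aᵀ * X + X * A + Cᵀ * C = 0) : X = (1 / 2 : ℝ) • P :=
    hHurwitz.eq_of_lyapunov hX hsol
  refine ⟨⟨(1 / 2 : ℝ) • P, ⟨hP.smul _, hsol⟩, fun X hX ↦ huniq X hX.2⟩, fun X _ hX ↦ ?_⟩
  rw [huniq X hX, hB]
  exact trace_transpose_mul_half_fromBlocks_mul hTxs hTxdet hTνs hTνdet tc tb Wb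

/-- the unique symmetric solution `X` of the Lyapunov equation
`AᵀX + XA + CᵀC = 0` satisfies
`Tr(BᵀXB) = (t_c²/2)·Tr(Tx⁻¹) + (t_b²/2)·Tr(Wbᵀ Tν⁻¹ Wb)`,
i.e. the squared H₂ norm of the saddle-point dynamics equals this expression. -/
theorem saddle_point_H2_norm
    (n r m : ℕ) (hrn : r < n)
    (Q : Matrix (Fin n) (Fin n) ℝ) (hQd : Q.IsDiag) (hQ : Q.PosDef)
    (S : Matrix (Fin r) (Fin n) ℝ) (hS : S.rank = r)
    (Wb : Matrix (Fin r) (Fin m) ℝ)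
    (Tx : Matrix (Fin n) (Fin n) ℝ) (hTxd : Tx.IsDiag) (hTx : Tx.PosDef)
    (Tν : Matrix (Fin r) (Fin r) ℝ) (hTνd : Tν.IsDiag) (hTν : Tν.PosDef)
    (tc tb : ℝ) (htc : 0 ≤ tc) (htb : 0 ≤ tb)
    (A : Matrix (Fin n ⊕ Fin r) (Fin n ⊕ Fin r) ℝ)
    (hA : A = Matrix.fromBlocks (-(Tx⁻¹ * Q)) (-(Tx⁻¹ * Sᵀ)) (Tν⁻¹ * S) 0)
    (B : Matrix (Fin n ⊕ Fin r) (Fin n ⊕ Fin m) ℝ)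
    (hB : B = Matrix.fromBlocks (tc • Tx⁻¹) 0 0 (tb • (Tν⁻¹ * Wb)))
    (C : Matrix (Fin n) (Fin n ⊕ Fin r) ℝ)
    (hC : C = Matrix.fromCols hQ.posSemidef.sqrt 0) :
    (∃! X : Matrix (Fin n ⊕ Fin r) (Fin n ⊕ Fin r) ℝ,
        X.IsSymm ∧ Aᵀ * X + X * A + Cᵀ * C = 0) ∧
      ∀ X : Matrix (Fin n ⊕ Fin r) (Fin n ⊕ Fin r) ℝ,
        X.IsSymm → Aᵀ * X + X * A + Cᵀ * C = 0 →
          (Bᵀ * X * B).trace =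
            tc ^ 2 / 2 * Tx⁻¹.trace + tb ^ 2 / 2 * (Wbᵀ * Tν⁻¹ * Wb).trace :=
  saddle_point_H2_norm_general n r m Q hQ S hS Wb Tx hTx Tν hTν tc tb A hA B hB C hC
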